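/- arXiv:2302.09882 — 4 statements merged into one kernel-verified Lean document; each statement's English description precedes it below -/
import Mathlib

section
/- Let W be a commutative ring, J ⊆ W an ideal, σ : W → W a ring endomorphism, and σ̇ : J → W an additive map that is σ-linear, i.e. σ̇(w·x) = σ(w)·σ̇(x) for all w ∈ W and x ∈ J. Assume that σ̇(J) generates W as a W-module, i.e. there exist finitely many x₁, …, x_n ∈ J and w₁, …, w_n ∈ W with w₁·σ̇(x₁) + ⋯ + w_n·σ̇(x_n) = 1. Then there exists a unique element θ ∈ W such that σ(a) = θ·σ̇(a) for every a ∈ J. -/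
/-- Let `W` be a commutative ring, `J ⊆ W` an ideal, `σ : W → W` a ring
endomorphism, and `σd : J → W` an additive map which is `σ`-linear, i.e.
`σd (w • x) = σ w * σd x` for all `w ∈ W`, `x ∈ J`.  If `σd J` generates `W` as a `W`-module
(there are finitely many `xᵢ ∈ J`, `wᵢ ∈ W` with `∑ wᵢ * σd xᵢ = 1`), then there is a unique
`θ ∈ W` with `σ a = θ * σd a` for every `a ∈ J`. -/
theorem statement0 {W : Type*} [CommRing W] (J : Ideal W) (σ : W →+* W)
    (σd : J →+ W)
    (hlin : ∀ (w : W) (x : J), σd (w • x) = σ w * σd x)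
    (hgen : ∃ (n : ℕ) (x : Fin n → J) (w : Fin n → W),
      ∑ i, w i * σd (x i) = 1) :
    ∃! θ : W, ∀ a : J, σ (a : W) = θ * σd a := by
  obtain ⟨n, x, w, hw⟩ := hgen
  have key : ∀ a b : J, σ (a : W) * σd b = σ (b : W) * σd a := by
    intro a b
    have h : ((a : W)) • b = ((b : W)) • a := Subtype.ext (mul_comm _ _)
    calc σ (a : W) * σd b = σd (((a : W)) • b) := (hlin _ _).symm
      _ = σd (((b : W)) • a) := by rw [h]
      _ = σ (b : W) * σd a := hlin _ _
  refine ⟨∑ i, w i * σ ((x i : W)), ?_, ?_⟩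
  · intro a
    calc σ (a : W) = σ (a : W) * ∑ i, w i * σd (x i) := by rw [hw, mul_one]
      _ = ∑ i, w i * (σ (a : W) * σd (x i)) := by rw [Finset.mul_sum]; exact Finset.sum_congr rfl fun i _ => by ring
      _ = ∑ i, w i * (σ ((x i : W)) * σd a) := by
          simp only [key a]
      _ = (∑ i, w i * σ ((x i : W))) * σd a := by rw [Finset.sum_mul]; exact Finset.sum_congr rfl fun i _ => by ring
  · intro θ hθ
    calc θ = θ * ∑ i, w i * σd (x i) := by rw [hw, mul_one]
      _ = ∑ i, w i * (θ * σd (x i)) := by rw [Finset.mul_sum]; exact Finset.sum_congr rfl fun i _ => by ring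
      _ = ∑ i, w i * σ ((x i : W)) := by simp only [← hθ]
end

section
/- Let (W, J, σ, σ̇) be a frame datum such that σ̇(J) generates W and such that σ(a) = p·σ̇(a) for all a ∈ J, where p is a fixed prime. Let (P_i, ι_i, α_i, F_i)_{i ≥ 0} be a predisplay over this frame datum. Then F_i ∘ ι_i = p·F_{i+1} for every i ≥ 0, i.e. F_i(ι_i(x)) = p·F_{i+1}(x) for all x ∈ P_{i+1}. -/
open TensorProduct

/-- Let `(W, J, σ, σd)` be a frame datum such that `σd J` generates `W` and
such that `σ a = p * σd a` for all `a ∈ J` (`p` a fixed prime).  Let `(P i, ι i, α i, F i)` be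
a predisplay over this frame datum.  Then `F i ∘ ι i = p • F (i+1)` for every `i`. -/
theorem statement1 {W : Type*} [CommRing W] (p : ℕ) (hp : p.Prime)
    (J : Ideal W) (σ : W →+* W) (σd : J →ₛₗ[σ] W)
    (hgen : ∃ (n : ℕ) (x : Fin n → J) (w : Fin n → W),
      ∑ i, w i * σd (x i) = 1)
    (hθ : ∀ a : J, σ (a : W) = (p : W) * σd a)
    (P : ℕ → Type*) [∀ i, AddCommGroup (P i)] [∀ i, Module W (P i)]
    (ι : ∀ i, P (i + 1) →ₗ[W] P i)
    (α : ∀ i, (J ⊗[W] P i) →ₗ[W] P (i + 1))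
    (F : ∀ i, P i →ₛₗ[σ] P 0)
    -- (P1)  ι_i ∘ α_i = α_{i-1} ∘ (id_J ⊗ ι_{i-1})  for i ≥ 1
    (hP1 : ∀ i (η : J) (x : P (i + 1)),
      ι (i + 1) (α (i + 1) (η ⊗ₜ x)) = α i (η ⊗ₜ[W] (ι i x)))
    -- (P2)  ι_i ∘ α_i is the multiplication map
    (hP2 : ∀ i (η : J) (x : P i), ι i (α i (η ⊗ₜ x)) = (η : W) • x)
    -- (P3)  F_{i+1} ∘ α_i = F̃_i
    (hP3 : ∀ i (η : J) (x : P i), F (i + 1) (α i (η ⊗ₜ x)) = σd η • F i x)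
    (i : ℕ) (x : P (i + 1)) :
    F i (ι i x) = (p : W) • F (i + 1) x := by
  have key : ∀ η : J, σd η • F i (ι i x) = σd η • ((p : W) • F (i + 1) x) := by
    intro η
    have h1 : σd η • F i (ι i x) = F (i + 1) (ι (i + 1) (α (i + 1) (η ⊗ₜ x))) := by
      rw [hP1, hP3]
    rw [h1, hP2 (i + 1) η x, (F (i + 1)).map_smulₛₗ, hθ, mul_smul, smul_comm]
  obtain ⟨n, xs, ws, hsum⟩ := hgen
  calc F i (ι i x) = (∑ j, ws j * σd (xs j)) • F i (ι i x) := by rw [hsum, one_smul]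
    _ = ∑ j, ws j • (σd (xs j) • F i (ι i x)) := by
        rw [Finset.sum_smul]; simp_rw [mul_smul]
    _ = ∑ j, ws j • (σd (xs j) • ((p : W) • F (i + 1) x)) := by simp_rw [key]
    _ = (∑ j, ws j * σd (xs j)) • ((p : W) • F (i + 1) x) := by
        rw [Finset.sum_smul]; simp_rw [mul_smul]
    _ = (p : W) • F (i + 1) x := by rw [hsum, one_smul]
end

section
/- Let p be a prime and R a commutative ℤ_(p)-algebra, and let W(R) be the ring of p-typical Witt vectors of R with Verschiebung V. Then: (a) V : W(R) → W(R) is injective; (b) its image I_R := V(W(R)) is an ideal of W(R); and (c) there is a divided power structure γ on the ideal I_R such that γ_m(V(ξ)) = (p^{m−1}/m!)·V(ξ^m) for all ξ ∈ W(R) and all m ≥ 1, where p^{m−1}/m! denotes the corresponding element of ℤ_(p) (which exists since v_p(m!) ≤ m − 1) acting on the ℤ_(p)-algebra W(R). -/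
open WittVector Nat

set_option linter.unusedSectionVars false



namespace S7aux

variable (p : ℕ) [hp : Fact p.Prime] [hP : (Ideal.span {(p : ℤ)}).IsPrime]

/-- `ℤ_(p)`. -/
abbrev Zp := Localization.AtPrime (Ideal.span {(p : ℤ)})

lemma injZ : Function.Injective (algebraMap ℤ (Zp p)) :=
  IsLocalization.injective _ (Ideal.span {(p : ℤ)}).primeCompl_le_nonZeroDivisors

lemma natCast_ne_zero {k : ℕ} (hk : k ≠ 0) : (k : Zp p) ≠ 0 := by
  have : ((k : ℤ) : Zp p) ≠ 0 := by
    intro h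
    have := injZ p (a₁ := (k : ℤ)) (a₂ := 0) (by simpa using h)
    exact_mod_cast hk (by exact_mod_cast this)
  simpa using this

lemma padic_val_le {n : ℕ} (hn : 1 ≤ n) : padicValNat p (n !) ≤ n - 1 := by
  have h1 : (p - 1) * padicValNat p (n !) = n - (p.digits n).sum :=
    sub_one_mul_padicValNat_factorial n
  have hs : 1 ≤ (p.digits n).sum := by
    have hne : p.digits n ≠ [] := Nat.digits_ne_nil_iff_ne_zero.mpr (by omega)
    have hlast := Nat.getLast_digit_ne_zero p (m := n) (by omega)
    have hmem : (p.digits n).getLast hne ∈ p.digits n := List.getLast_mem hne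
    have := List.single_le_sum (l := p.digits n) (fun x _ => Nat.zero_le x) _ hmem
    omega
  have hp2 : 2 ≤ p := hp.out.two_le
  have hv : padicValNat p (n !) ≤ (p - 1) * padicValNat p (n !) :=
    Nat.le_mul_of_pos_left _ (by omega)
  have hds := Nat.digit_sum_le p n
  have h2 : padicValNat p (n !) ≤ n - (p.digits n).sum := h1 ▸ hv
  omega

lemma exists_cc {n : ℕ} (hn : 1 ≤ n) :
    ∃ c : Zp p, (n ! : Zp p) * c = (p : Zp p) ^ (n - 1) := by
  set v := padicValNat p (n !) with hv
  have hvn : v ≤ n - 1 := padic_val_le p hn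
  have hdvd : p ^ v ∣ n ! := pow_padicValNat_dvd
  set w := n ! / p ^ v with hwdef
  have hw : p ^ v * w = n ! := Nat.mul_div_cancel' hdvd
  have hpw : ¬ p ∣ w := by
    intro h
    obtain ⟨t, ht⟩ := h
    have : p ^ (v + 1) ∣ n ! := ⟨t, by rw [← hw, ht]; ring⟩
    exact pow_succ_padicValNat_not_dvd (Nat.factorial_ne_zero n) this
  have hwmem : (w : ℤ) ∈ (Ideal.span {(p : ℤ)}).primeCompl := by
    intro hmem
    rw [SetLike.mem_coe, Ideal.mem_span_singleton] at hmem
    exact hpw (by exact_mod_cast hmem)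
  have hu : IsUnit (algebraMap ℤ (Zp p) w) :=
    IsLocalization.map_units (Zp p) (⟨(w : ℤ), hwmem⟩ : (Ideal.span {(p : ℤ)}).primeCompl)
  refine ⟨(↑hu.unit⁻¹ : Zp p) * (p : Zp p) ^ (n - 1 - v), ?_⟩
  have hfact : (n ! : Zp p) = (p : Zp p) ^ v * algebraMap ℤ (Zp p) w := by
    rw [← hw]; push_cast [map_natCast]; ring
  rw [hfact]
  have : algebraMap ℤ (Zp p) (w : ℤ) * (↑hu.unit⁻¹ : Zp p) = 1 := hu.mul_val_inv
  calc (p : Zp p) ^ v * algebraMap ℤ (Zp p) (w:ℤ) * ((↑hu.unit⁻¹ : Zp p) * (p : Zp p) ^ (n - 1 - v))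
      = (algebraMap ℤ (Zp p) (w:ℤ) * (↑hu.unit⁻¹ : Zp p)) * ((p : Zp p) ^ v * (p : Zp p) ^ (n - 1 - v)) := by ring
    _ = (p : Zp p) ^ (n - 1) := by rw [this, one_mul, ← pow_add]; congr 1; omega

/-- `p^(n-1)/n!` in `ℤ_(p)` (for `n ≥ 1`; junk value `1` otherwise). -/
noncomputable def cc (n : ℕ) : Zp p :=
  if hn : 1 ≤ n then (exists_cc p hn).choose else 1

lemma cc_spec {n : ℕ} (hn : 1 ≤ n) : (n ! : Zp p) * cc p n = (p : Zp p) ^ (n - 1) := by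
  rw [cc, dif_pos hn]; exact (exists_cc p hn).choose_spec

lemma cc_unique {n : ℕ} (hn : 1 ≤ n) {c : Zp p}
    (hc : (n ! : Zp p) * c = (p : Zp p) ^ (n - 1)) : c = cc p n :=
  mul_left_cancel₀ (natCast_ne_zero p (Nat.factorial_ne_zero n)) (hc.trans (cc_spec p hn).symm)

lemma cc_one : cc p 1 = 1 := by
  have := cc_unique p (n := 1) le_rfl (c := 1) (by norm_num)
  exact this.symm

lemma idmul {m n : ℕ} (hm : 1 ≤ m) (hn : 1 ≤ n) :
    (p : Zp p) * cc p m * cc p n = ((m + n).choose m : Zp p) * cc p (m + n) := by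
  apply mul_left_cancel₀ (a := (m ! : Zp p) * (n ! : Zp p))
    (mul_ne_zero (natCast_ne_zero p (Nat.factorial_ne_zero m))
      (natCast_ne_zero p (Nat.factorial_ne_zero n)))
  obtain ⟨a, rfl⟩ := Nat.exists_eq_add_of_le hm
  obtain ⟨b, rfl⟩ := Nat.exists_eq_add_of_le hn
  have h1 : (((1+a) + (1+b)).choose (1+a) : Zp p) * ((1+a)! : Zp p) * ((1+b)! : Zp p)
      = (((1+a)+(1+b))! : Zp p) := by
    have := Nat.choose_mul_factorial_mul_factorial (n := (1+a)+(1+b)) (k := 1+a) (by omega)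
    rw [show (1+a)+(1+b) - (1+a) = 1+b by omega] at this
    exact_mod_cast congrArg (fun x : ℕ => (x : Zp p)) this
  calc (((1+a)!:Zp p) * ((1+b)!:Zp p)) * ((p : Zp p) * cc p (1+a) * cc p (1+b))
      = (p : Zp p) * ((((1+a)!:Zp p)) * cc p (1+a)) * ((((1+b)!:Zp p)) * cc p (1+b)) := by ring
    _ = (p : Zp p) * (p : Zp p) ^ (1+a-1) * (p:Zp p) ^ (1+b-1) := by
        rw [cc_spec p (by omega), cc_spec p (by omega)]
    _ = (p : Zp p) ^ ((1+a)+(1+b)-1) := by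
        rw [show 1+a-1 = a by omega, show 1+b-1 = b by omega,
          show (1+a)+(1+b)-1 = 1 + (a+b) by omega]
        ring
    _ = ((((1+a)+(1+b))! : Zp p)) * cc p ((1+a)+(1+b)) := (cc_spec p (by omega)).symm
    _ = (((1+a)+(1+b)).choose (1+a) : Zp p) * (((1+a)!:Zp p) * ((1+b)!:Zp p)) * cc p ((1+a)+(1+b)) := by
        rw [← h1]; ring
    _ = (((1+a)!:Zp p) * ((1+b)!:Zp p)) * ((((1+a)+(1+b)).choose (1+a) : Zp p) * cc p ((1+a)+(1+b))) := by ring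

lemma idcomp {m n : ℕ} (hm : 1 ≤ m) (hn : 1 ≤ n) :
    cc p m * cc p n ^ m = (Nat.uniformBell m n : Zp p) * cc p (m * n) := by
  apply mul_left_cancel₀ (a := (m ! : Zp p) * ((n ! : Zp p)) ^ m)
    (mul_ne_zero (natCast_ne_zero p (Nat.factorial_ne_zero m))
      (pow_ne_zero _ (natCast_ne_zero p (Nat.factorial_ne_zero n))))
  have hub : (Nat.uniformBell m n : Zp p) * ((n ! : Zp p)) ^ m * (m ! : Zp p)
      = ((m * n)! : Zp p) := by
    exact_mod_cast congrArg (fun x : ℕ => (x : Zp p)) (Nat.uniformBell_mul_eq m (by omega))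
  obtain ⟨a, rfl⟩ := Nat.exists_eq_add_of_le hm
  obtain ⟨b, rfl⟩ := Nat.exists_eq_add_of_le hn
  calc ((1+a)! : Zp p) * ((1+b)! : Zp p) ^ (1+a) * (cc p (1+a) * cc p (1+b) ^ (1+a))
      = (((1+a)! : Zp p) * cc p (1+a)) * (((1+b)! : Zp p) * cc p (1+b)) ^ (1+a) := by ring
    _ = (p : Zp p) ^ (1+a-1) * ((p : Zp p) ^ (1+b-1)) ^ (1+a) := by
        rw [cc_spec p (by omega), cc_spec p (by omega)]
    _ = (p : Zp p) ^ ((1+a)*(1+b)-1) := by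
        rw [show 1+a-1 = a by omega, show 1+b-1 = b by omega, ← pow_mul, ← pow_add]
        congr 1
        have hx : (1+a)*(1+b) = 1 + (a + b*(1+a)) := by ring
        omega
    _ = (((1+a)*(1+b))! : Zp p) * cc p ((1+a)*(1+b)) := (cc_spec p (Nat.one_le_iff_ne_zero.mpr (by positivity))).symm
    _ = (Nat.uniformBell (1+a) (1+b) : Zp p) * ((1+b)! : Zp p) ^ (1+a) * ((1+a)! : Zp p)
          * cc p ((1+a)*(1+b)) := by rw [hub]
    _ = ((1+a)! : Zp p) * ((1+b)! : Zp p) ^ (1+a)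
          * ((Nat.uniformBell (1+a) (1+b) : Zp p) * cc p ((1+a)*(1+b))) := by ring


section Witt

variable (R : Type*) [CommRing R] [Algebra (Zp p) (WittVector p R)]

local notation "W" => WittVector p R

omit hP in
lemma Vinj : Function.Injective (⇑(verschiebung : W →+ W)) := by
  intro x y h
  ext n
  have := congrArg (fun w : W => w.coeff (n + 1)) h
  simpa [verschiebung_coeff_succ] using this

omit hP in
lemma mulV (a x : W) : a * verschiebung x = verschiebung (frobenius a * x) := by
  rw [mul_comm (frobenius a) x, verschiebung_mul_frobenius, mul_comm]

omit hP in
lemma VmulV (x y : W) : verschiebung x * verschiebung y = (p : W) * verschiebung (x * y) := by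
  rw [mulV, frobenius_verschiebung, mulV p R ((p : ℕ) : W) (x * y),
    map_natCast (frobenius : W →+* W)]
  congr 1
  ring

omit hP in
lemma Vnat (z : W) (c : ℕ) :
    verschiebung (z * (c : W)) = verschiebung z * (c : W) := by
  conv_lhs => rw [← map_natCast (frobenius : W →+* W) c]
  rw [verschiebung_mul_frobenius]

/-- The ideal `V(W(R))`. -/
def Iv : Ideal W where
  carrier := Set.range (⇑(verschiebung : W →+ W))
  add_mem' := by rintro _ _ ⟨x, rfl⟩ ⟨y, rfl⟩; exact ⟨x + y, map_add _ _ _⟩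
  zero_mem' := ⟨0, map_zero _⟩
  smul_mem' := by rintro c _ ⟨x, rfl⟩; exact ⟨frobenius c * x, (mulV p R c x).symm⟩

omit hP in
lemma mem_Iv {x : W} : x ∈ Iv p R ↔ ∃ ξ, verschiebung ξ = x := Iff.rfl

open scoped Classical in
/-- The divided power function on `V(W(R))`. -/
noncomputable def dp (n : ℕ) (x : W) : W :=
  if h : ∃ ξ, verschiebung ξ = x then
    if n = 0 then 1
    else algebraMap (Zp p) W (cc p n) * verschiebung (h.choose ^ n)
  else 0

lemma dp_null {n : ℕ} {x : W} (hx : ¬∃ ξ, verschiebung ξ = x) : dp p R n x = 0 := by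
  simp only [dp]
  rw [dif_neg hx]

lemma dp_zero {x : W} (hx : ∃ ξ, verschiebung ξ = x) : dp p R 0 x = 1 := by
  simp only [dp]
  rw [dif_pos hx]
  simp

lemma dp_V {n : ℕ} (hn : n ≠ 0) (ξ : W) :
    dp p R n (verschiebung ξ) = algebraMap (Zp p) W (cc p n) * verschiebung (ξ ^ n) := by
  have h : ∃ ζ : W, verschiebung ζ = verschiebung ξ := ⟨ξ, rfl⟩
  simp only [dp]
  rw [dif_pos h, if_neg hn, Vinj p R h.choose_spec]

lemma dp_V_mem {n : ℕ} (hn : n ≠ 0) (ξ : W) :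
    dp p R n (verschiebung ξ)
      = verschiebung (frobenius (algebraMap (Zp p) W (cc p n)) * ξ ^ n) := by
  rw [dp_V p R hn, mulV]

/-- The divided power structure on `V(W(R))`. -/
noncomputable def gamma : DividedPowers (Iv p R) where
  dpow := dp p R
  dpow_null {n x} hx := dp_null p R (by simpa [mem_Iv] using hx)
  dpow_zero {x} hx := dp_zero p R hx
  dpow_one {x} hx := by
    obtain ⟨ξ, rfl⟩ := hx
    rw [dp_V p R one_ne_zero, cc_one, map_one, one_mul, pow_one]
  dpow_mem {n x} hn hx := by
    obtain ⟨ξ, rfl⟩ := hx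
    rw [dp_V_mem p R hn]
    exact ⟨_, rfl⟩
  dpow_add n {x y} hx hy := by
    obtain ⟨ξ, rfl⟩ := hx
    obtain ⟨η, rfl⟩ := hy
    rw [Finset.Nat.sum_antidiagonal_eq_sum_range_succ_mk, ← map_add]
    rcases eq_or_ne n 0 with rfl | hn
    · rw [dp_zero p R ⟨ξ + η, rfl⟩, Finset.sum_range_one]
      rw [dp_zero p R ⟨ξ, rfl⟩, Nat.sub_zero, dp_zero p R ⟨η, rfl⟩, one_mul]
    · rw [dp_V p R hn, add_pow, map_sum, Finset.mul_sum]
      refine Finset.sum_congr rfl fun k hk => ?_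
      rw [Finset.mem_range] at hk
      have hkn : k ≤ n := by omega
      rcases eq_or_ne k 0 with rfl | hk0
      · simp [dp_zero p R ⟨ξ, rfl⟩, dp_V p R hn, Vnat]
      · rcases eq_or_ne k n with rfl | hkn'
        · simp [dp_zero p R ⟨η, rfl⟩, dp_V p R hk0, Vnat]
        · have hnk0 : n - k ≠ 0 := by omega
          rw [dp_V p R hk0, dp_V p R hnk0, Vnat]
          have key : algebraMap (Zp p) W (cc p k) * verschiebung (ξ ^ k) *
              (algebraMap (Zp p) W (cc p (n - k)) * verschiebung (η ^ (n - k)))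
              = algebraMap (Zp p) W ((p : Zp p) * cc p k * cc p (n - k)) *
                verschiebung (ξ ^ k * η ^ (n - k)) := by
            rw [map_mul, map_mul, map_natCast]
            linear_combination (algebraMap (Zp p) W (cc p k) *
              algebraMap (Zp p) W (cc p (n - k))) * VmulV p R (ξ ^ k) (η ^ (n - k))
          rw [key, idmul p hk0.bot_lt hnk0.bot_lt,
            show k + (n - k) = n by omega,
            map_mul (algebraMap (Zp p) W), map_natCast (algebraMap (Zp p) W)]
          ring
  dpow_mul n {a x} hx := by
    obtain ⟨ξ, rfl⟩ := hx
    rw [mulV]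
    rcases eq_or_ne n 0 with rfl | hn
    · rw [dp_zero p R ⟨_, rfl⟩, dp_zero p R ⟨ξ, rfl⟩, pow_zero, one_mul]
    · rw [dp_V p R hn, dp_V p R hn, mul_pow, ← map_pow (frobenius : W →+* W), ← mulV]
      ring
  mul_dpow m n {x} hx := by
    obtain ⟨ξ, rfl⟩ := hx
    rcases eq_or_ne m 0 with rfl | hm
    · rw [dp_zero p R ⟨ξ, rfl⟩, zero_add, Nat.choose_zero_right]
      simp
    · rcases eq_or_ne n 0 with rfl | hn
      · rw [dp_zero p R ⟨ξ, rfl⟩, add_zero, Nat.choose_self]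
        simp
      · rw [dp_V p R hm, dp_V p R hn, dp_V p R (by omega : m + n ≠ 0)]
        have key : algebraMap (Zp p) W (cc p m) * verschiebung (ξ ^ m) *
            (algebraMap (Zp p) W (cc p n) * verschiebung (ξ ^ n))
            = algebraMap (Zp p) W ((p : Zp p) * cc p m * cc p n) *
              verschiebung (ξ ^ (m + n)) := by
          rw [map_mul, map_mul, map_natCast, pow_add]
          linear_combination (algebraMap (Zp p) W (cc p m) *
            algebraMap (Zp p) W (cc p n)) * VmulV p R (ξ ^ m) (ξ ^ n)
        rw [key, idmul p hm.bot_lt hn.bot_lt,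
          map_mul (algebraMap (Zp p) W), map_natCast (algebraMap (Zp p) W)]
        ring
  dpow_comp m {n x} hn hx := by
    obtain ⟨ξ, rfl⟩ := hx
    rw [dp_V_mem p R hn]
    rcases eq_or_ne m 0 with rfl | hm
    · rw [dp_zero p R ⟨_, rfl⟩, Nat.zero_mul, dp_zero p R ⟨ξ, rfl⟩,
        Nat.uniformBell_zero_left]
      simp
    · rw [dp_V p R hm, dp_V p R (Nat.mul_ne_zero hm hn), mul_pow,
        ← map_pow (frobenius : W →+* W), ← map_pow (algebraMap (Zp p) W),
        ← pow_mul, ← mulV, show n * m = m * n from Nat.mul_comm n m]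
      calc algebraMap (Zp p) W (cc p m) *
            (algebraMap (Zp p) W (cc p n ^ m) * verschiebung (ξ ^ (m * n)))
          = algebraMap (Zp p) W (cc p m * cc p n ^ m) * verschiebung (ξ ^ (m * n)) := by
            rw [map_mul]; ring
        _ = algebraMap (Zp p) W ((Nat.uniformBell m n : Zp p) * cc p (m * n)) *
              verschiebung (ξ ^ (m * n)) := by rw [idcomp p hm.bot_lt hn.bot_lt]
        _ = (Nat.uniformBell m n : W) *
              (algebraMap (Zp p) W (cc p (m * n)) * verschiebung (ξ ^ (m * n))) := by
            rw [map_mul, map_natCast]; ring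

end Witt

end S7aux

open S7aux in
/-- Let `p` be a prime and `R` a commutative `ℤ_(p)`-algebra, `W(R)` the
`p`-typical Witt vectors (also a `ℤ_(p)`-algebra).  Then (a) Verschiebung is injective;
(b) its image `I_R = V(W(R))` is an ideal; (c) there is a divided power structure `γ` on
`I_R` with `γ_m (V ξ) = (p^(m-1)/m!) • V (ξ^m)` for all `ξ` and `m ≥ 1`, where `p^(m-1)/m!`
is the element `c ∈ ℤ_(p)` determined by `m! * c = p^(m-1)`. -/
theorem statement7 (p : ℕ) [hp : Fact p.Prime]
    [hP : (Ideal.span {(p : ℤ)}).IsPrime]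
    (R : Type*) [CommRing R]
    [Algebra (Localization.AtPrime (Ideal.span {(p : ℤ)})) R]
    [Algebra (Localization.AtPrime (Ideal.span {(p : ℤ)})) (WittVector p R)] :
    Function.Injective (⇑(verschiebung : WittVector p R →+ WittVector p R)) ∧
    ∃ I : Ideal (WittVector p R),
      (I : Set (WittVector p R)) = Set.range (⇑(verschiebung : WittVector p R →+ WittVector p R)) ∧
      ∃ γ : DividedPowers I,
        ∀ (m : ℕ), 1 ≤ m → ∀ (ξ : WittVector p R)
          (c : Localization.AtPrime (Ideal.span {(p : ℤ)})),
          (Nat.factorial m : Localization.AtPrime (Ideal.span {(p : ℤ)})) * c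
              = (p : Localization.AtPrime (Ideal.span {(p : ℤ)})) ^ (m - 1) →
          γ.dpow m (verschiebung ξ)
            = algebraMap (Localization.AtPrime (Ideal.span {(p : ℤ)})) (WittVector p R) c
                * verschiebung (ξ ^ m) := by
  refine ⟨Vinj p R, Iv p R, rfl, gamma p R, fun m hm ξ c hc => ?_⟩
  have hcc : c = cc p m := cc_unique p hm hc
  rw [hcc]
  exact dp_V p R (by omega) ξ
end

section
/- Let p be a prime and let S be a commutative ring that is p-adically complete (complete and separated for the topology defined by the powers of the ideal pS). Let 𝔞 ⊆ S be an ideal such that 𝔞^N ⊆ pS for some N ≥ 1, and set R := S/𝔞. Let 𝒥 := ker(W(S) → S → R), i.e. 𝒥 = { x ∈ W(S) : the zeroth Witt component x₀ of x lies in 𝔞 }, where W(S) → S is the zeroth ghost/component map. Then 𝒥 + pW(S) is contained in the Jacobson radical of W(S). -/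
/-!
Since `S` is `p`-adically complete, `p` lies in the Jacobson radical of `S`, and then so
does `𝔞`, because `𝔞 ^ N ⊆ pS` and the Jacobson radical is a radical ideal. The key point is that
`W(S) → S, x ↦ x₀` reflects units once `p` is in the Jacobson radical of `S`; a local
homomorphism pulls the Jacobson radical back into the Jacobson radical, and `𝒥 + pW(S)` maps
into `𝔞 + pS`.

To invert `x` with `x₀` a unit it suffices to invert all its truncations, compatibly. After
multiplying by a Teichmüller representative, `x = 1 + V w`; from an inverse `y` of
`1 + p w` modulo `V^n` one gets `(1 + V w)(1 - V (w y)) ≡ 1` modulo `V^(n+1)`, because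
`V a · V b = V (p a b)`. The zeroth component of `1 + p w` is `1 + p w₀`, a unit, so the
induction runs over all `x` with unit zeroth component.
-/

open WittVector

theorem Ideal.comap_jacobson_bot_le_of_isLocalHom {A B : Type*} [CommRing A] [CommRing B]
    (f : A →+* B) [IsLocalHom f] :
    (⊥ : Ideal B).jacobson.comap f ≤ (⊥ : Ideal A).jacobson := by
  intro x hx
  rw [Ideal.mem_comap, Ideal.mem_jacobson_bot] at hx
  rw [Ideal.mem_jacobson_bot]
  intro y
  apply isUnit_of_map_unit f
  simpa using hx (f y)

theorem Ideal.le_jacobson_bot_of_pow_le {R : Type*} [CommRing R] {I J : Ideal R} {N : ℕ}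
    (hI : I ^ N ≤ J) (hJ : J ≤ (⊥ : Ideal R).jacobson) : I ≤ (⊥ : Ideal R).jacobson :=
  fun _ ha => (⊥ : Ideal R).isRadical_jacobson ⟨N, hJ (hI (Ideal.pow_mem_pow ha N))⟩

namespace WittVector

variable {p : ℕ} [Fact p.Prime] {S : Type*} [CommRing S]

local notation "𝕎" => WittVector p

theorem exists_eq_one_add_verschiebung {x : 𝕎 S} (hx : x.coeff 0 = 1) :
    ∃ w, x = 1 + verschiebung w := by
  refine ⟨mk p fun n => (x - 1).coeff (n + 1), eq_add_of_sub_eq' ?_⟩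
  ext (_ | n)
  · rw [verschiebung_coeff_zero, ← constantCoeff_apply, map_sub, map_one, constantCoeff_apply,
      hx, sub_self]
  · rw [verschiebung_coeff_succ, coeff_mk]

theorem verschiebung_mem_ker_truncate_succ {n : ℕ} {x : 𝕎 S}
    (hx : x ∈ RingHom.ker (truncate (p := p) n)) :
    verschiebung x ∈ RingHom.ker (truncate (p := p) (n + 1)) := by
  rw [mem_ker_truncate] at hx ⊢
  rintro (_ | i) hi
  · exact verschiebung_coeff_zero x
  · rw [verschiebung_coeff_succ]
    exact hx i (by omega)

theorem one_add_verschiebung_mul_one_sub_verschiebung (a b : 𝕎 S) :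
    (1 + verschiebung a) * (1 - verschiebung b) =
      1 + verschiebung (a - b - a * (b * (p : 𝕎 S))) := by
  have hVV : verschiebung a * verschiebung b = verschiebung (a * (b * (p : 𝕎 S))) := by
    rw [← frobenius_verschiebung, verschiebung_mul_frobenius]
  rw [map_sub, map_sub, ← hVV]
  ring

theorem isUnit_truncate_succ_one_add_verschiebung {n : ℕ} {w : 𝕎 S}
    (h : IsUnit (truncate n (1 + (p : 𝕎 S) * w))) :
    IsUnit (truncate (n + 1) (1 + verschiebung w)) := by
  obtain ⟨y, hy⟩ : ∃ y, truncate n ((1 + (p : 𝕎 S) * w) * y) = 1 := by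
    obtain ⟨v, hv⟩ := h.exists_right_inv
    obtain ⟨y, rfl⟩ := truncate_surjective (p := p) n S v
    exact ⟨y, by rw [map_mul, hv]⟩
  set e := (1 + (p : 𝕎 S) * w) * y - 1 with he
  have he_ker : w * e ∈ RingHom.ker (truncate (p := p) n) :=
    Ideal.mul_mem_left _ w (by rw [RingHom.mem_ker, he, map_sub, hy, map_one, sub_self])
  have hVe := RingHom.mem_ker.1 (verschiebung_mem_ker_truncate_succ he_ker)
  refine IsUnit.of_mul_eq_one (truncate (n + 1) (1 - verschiebung (w * y))) ?_
  rw [← map_mul, one_add_verschiebung_mul_one_sub_verschiebung,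
    show w - w * y - w * (w * y * (p : 𝕎 S)) = -(w * e) by rw [he]; ring,
    map_neg, map_add, map_neg, hVe, neg_zero, add_zero, map_one]

theorem isUnit_truncate_of_isUnit_coeff_zero (hp : (p : S) ∈ (⊥ : Ideal S).jacobson) (n : ℕ)
    {x : 𝕎 S} (hx : IsUnit (x.coeff 0)) : IsUnit (truncate n x) := by
  induction n generalizing x with
  | zero =>
    have : Subsingleton (TruncatedWittVector p 0 S) := inferInstanceAs (Subsingleton (Fin 0 → S))
    exact isUnit_of_subsingleton _
  | succ n ih =>
    obtain ⟨u, hu⟩ := hx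
    obtain ⟨w, hw⟩ := exists_eq_one_add_verschiebung (x := x * teichmuller p (↑u⁻¹ : S))
      (by rw [mul_coeff_zero, teichmuller_coeff_zero, ← hu, Units.mul_inv])
    have hpw : IsUnit ((1 + (p : 𝕎 S) * w).coeff 0) := by
      rw [← constantCoeff_apply, map_add, map_one, map_mul, map_natCast, constantCoeff_apply,
        add_comm]
      exact Ideal.mem_jacobson_bot.1 hp _
    have := isUnit_truncate_succ_one_add_verschiebung (ih hpw)
    rw [← hw, map_mul] at this
    exact isUnit_of_mul_isUnit_left this

theorem isUnit_of_forall_isUnit_truncate {x : 𝕎 S} (h : ∀ n, IsUnit (truncate n x)) :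
    IsUnit x := by
  let u n : TruncatedWittVector p n S := ↑(h n).unit⁻¹
  have hu n : truncate n x * u n = 1 := (h n).mul_val_inv
  have compat {m n : ℕ} (hmn : m ≤ n) : TruncatedWittVector.truncate hmn (u n) = u m := by
    refine left_inv_eq_right_inv ?_ (hu m)
    rw [← TruncatedWittVector.truncate_wittVector_truncate hmn, ← map_mul, mul_comm, hu, map_one]
  let z : 𝕎 S := mk p fun k => (u (k + 1)).coeff (Fin.last k)
  have hz n : truncate n z = u n := by
    ext i
    rw [coeff_truncate, coeff_mk, ← compat i.is_lt, TruncatedWittVector.coeff_truncate]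
    rfl
  refine IsUnit.of_mul_eq_one z ?_
  rw [← sub_eq_zero, ← Ideal.mem_bot, ← TruncatedWittVector.iInf_ker_truncate, Ideal.mem_iInf]
  intro n
  rw [RingHom.mem_ker, map_sub, map_mul, hz, hu, map_one, sub_self]

theorem isLocalHom_constantCoeff (hp : (p : S) ∈ (⊥ : Ideal S).jacobson) :
    IsLocalHom (constantCoeff : 𝕎 S →+* S) :=
  ⟨fun _ hx => isUnit_of_forall_isUnit_truncate fun n =>
    isUnit_truncate_of_isUnit_coeff_zero hp n hx⟩

end WittVector

theorem statement9_general (p : ℕ) [hp : Fact p.Prime]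
    (S : Type*) [CommRing S]
    [IsAdicComplete (Ideal.span {(p : S)}) S]
    (𝔞 : Ideal S) (N : ℕ) (h𝔞 : 𝔞 ^ N ≤ Ideal.span {(p : S)}) :
    RingHom.ker ((Ideal.Quotient.mk 𝔞).comp (constantCoeff : WittVector p S →+* S))
        ⊔ Ideal.span {(p : WittVector p S)}
      ≤ (⊥ : Ideal (WittVector p S)).jacobson := by
  have hpJ : Ideal.span {(p : S)} ≤ (⊥ : Ideal S).jacobson := IsAdicComplete.le_jacobson_bot _
  have hpJac : (p : S) ∈ (⊥ : Ideal S).jacobson := hpJ (Ideal.mem_span_singleton_self _)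
  have := isLocalHom_constantCoeff hpJac
  refine le_trans (sup_le ?_ ?_) (Ideal.comap_jacobson_bot_le_of_isLocalHom constantCoeff)
  · rw [← RingHom.comap_ker, Ideal.mk_ker]
    exact Ideal.comap_mono (Ideal.le_jacobson_bot_of_pow_le h𝔞 hpJ)
  · rw [Ideal.span_singleton_le_iff_mem, Ideal.mem_comap, map_natCast]
    exact hpJac

/-- Let `p` be a prime and `S` a `p`-adically complete commutative ring.
Let `𝔞 ⊆ S` be an ideal with `𝔞^N ⊆ pS` for some `N ≥ 1` and set `R = S/𝔞`.  Let
`𝒥 = ker(W(S) → S → R)` (the Witt vectors whose zeroth component lies in `𝔞`).  Then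
`𝒥 + p·W(S)` is contained in the Jacobson radical of `W(S)`. -/
theorem statement9 (p : ℕ) [hp : Fact p.Prime]
    (S : Type*) [CommRing S]
    [IsAdicComplete (Ideal.span {(p : S)}) S]
    (𝔞 : Ideal S) (N : ℕ) (hN : 1 ≤ N) (h𝔞 : 𝔞 ^ N ≤ Ideal.span {(p : S)}) :
    RingHom.ker ((Ideal.Quotient.mk 𝔞).comp (constantCoeff : WittVector p S →+* S))
        ⊔ Ideal.span {(p : WittVector p S)}
      ≤ (⊥ : Ideal (WittVector p S)).jacobson :=
  statement9_general p (hp := hp) S 𝔞 N h𝔞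
end
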